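/- Let M1, M2, M3, M4 be matrices over GF(2) with M1, M3 of size c×(c+k) and M2, M4 of size c×(c+k), satisfying M1 M2ᵀ + M2 M1ᵀ = 0, M3 M4ᵀ + M4 M3ᵀ = 0, and M1 M4ᵀ + M2 M3ᵀ = I_c. Write M1 = [M11 M12] and M2 = [M21 M22] and M3 = [M31 M32] and M4 = [M41 M42] with first blocks c×c and second blocks c×k, and assume M11 is invertible. Then the matrix W = M31 M11⁻¹ + (M42 + M31 M11⁻¹ M22)(M32 + M31 M11⁻¹ M12)ᵀ is symmetric over GF(2). -/

import Mathlib

/-!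
Read the rows of `[M1 | M2]` and `[M3 | M4]` as two families `u`, `v` of vectors in a symplectic
space. Subtracting `A u` from `v`, with `A = M31 M11⁻¹`, clears the `M31` block, and the
symplectic Gram matrix of `v - A u` can be computed twice: bilinearly it is `Aᵀ - A`, and from
its block shape `[0 Q | R P]` it is `Q Pᵀ - P Qᵀ`. Equating the two says that `A - P Qᵀ` is
symmetric, and over `GF(2)` the signs disappear.
-/

open Matrix

namespace Matrix

theorem sub_eq_add_of_charTwo {m n R : Type*} [Ring R] [CharP R 2] (A B : Matrix m n R) :
    A - B = A + B := by
  ext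
  exact CharTwo.sub_eq_add _ _

variable {m n l R : Type*} [Fintype n] [Fintype l] [CommRing R]

/-- Symplectic products between the rows of `[X | Z]` and those of `[X' | Z']`. -/
def symplecticForm (X Z X' Z' : Matrix m n R) : Matrix m m R :=
  X * Z'ᵀ - Z * X'ᵀ

theorem symplecticForm_swap (X Z X' Z' : Matrix m n R) :
    symplecticForm X' Z' X Z = -(symplecticForm X Z X' Z')ᵀ := by
  simp only [symplecticForm, transpose_sub, transpose_mul, transpose_transpose, neg_sub]

theorem symplecticForm_sub_mul_self [Fintype m] (X Z X' Z' : Matrix m n R) (A : Matrix m m R) :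
    symplecticForm (X' - A * X) (Z' - A * Z) (X' - A * X) (Z' - A * Z) =
      symplecticForm X' Z' X' Z' - A * symplecticForm X Z X' Z' -
        symplecticForm X' Z' X Z * Aᵀ + A * symplecticForm X Z X Z * Aᵀ := by
  simp only [symplecticForm, transpose_sub, transpose_mul, Matrix.mul_sub, Matrix.sub_mul,
    Matrix.mul_assoc]
  abel

theorem symplecticForm_fromCols (X₁ Z₁ X₁' Z₁' : Matrix m l R) (X₂ Z₂ X₂' Z₂' : Matrix m n R) :
    symplecticForm (fromCols X₁ X₂) (fromCols Z₁ Z₂) (fromCols X₁' X₂') (fromCols Z₁' Z₂') =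
      symplecticForm X₁ Z₁ X₁' Z₁' + symplecticForm X₂ Z₂ X₂' Z₂' := by
  simp only [symplecticForm, transpose_fromCols, fromCols_mul_fromRows]
  abel

theorem isSymm_sub_mul_transpose_of_symplecticForm [Fintype m] [DecidableEq m]
    {M11 M21 M31 M41 : Matrix m l R} {M12 M22 M32 M42 : Matrix m n R} {A : Matrix m m R}
    (hu : symplecticForm (fromCols M11 M12) (fromCols M21 M22)
      (fromCols M11 M12) (fromCols M21 M22) = 0)
    (hv : symplecticForm (fromCols M31 M32) (fromCols M41 M42)
      (fromCols M31 M32) (fromCols M41 M42) = 0)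
    (huv : symplecticForm (fromCols M11 M12) (fromCols M21 M22)
      (fromCols M31 M32) (fromCols M41 M42) = 1)
    (hA : A * M11 = M31) :
    (A - (M42 - A * M22) * (M32 - A * M12)ᵀ).IsSymm := by
  set P := M42 - A * M22
  set Q := M32 - A * M12
  have hX : fromCols M31 M32 - A * fromCols M11 M12 = fromCols 0 Q := by
    rw [mul_fromCols, hA]
    ext i (j | j) <;> simp [Q]
  have hZ : fromCols M41 M42 - A * fromCols M21 M22 = fromCols (M41 - A * M21) P := by
    rw [mul_fromCols]
    ext i (j | j) <;> simp [P]
  have hGram : Q * Pᵀ - P * Qᵀ = Aᵀ - A := by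
    have h := symplecticForm_sub_mul_self (fromCols M11 M12) (fromCols M21 M22)
      (fromCols M31 M32) (fromCols M41 M42) A
    rw [symplecticForm_swap (fromCols M11 M12), hu, hv, huv, hX, hZ,
      symplecticForm_fromCols] at h
    simpa [symplecticForm, neg_add_eq_sub] using h
  rw [IsSymm, transpose_sub, transpose_mul, transpose_transpose, sub_eq_sub_iff_sub_eq_sub,
    hGram]

end Matrix

theorem stmt5 (c k : ℕ)
    (M11 M21 M31 M41 : Matrix (Fin c) (Fin c) (ZMod 2))
    (M12 M22 M32 M42 : Matrix (Fin c) (Fin k) (ZMod 2))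
    (M1 M2 M3 M4 : Matrix (Fin c) (Fin c ⊕ Fin k) (ZMod 2))
    (h1 : M1 = fromCols M11 M12) (h2 : M2 = fromCols M21 M22)
    (h3 : M3 = fromCols M31 M32) (h4 : M4 = fromCols M41 M42)
    (hc1 : M1 * M2ᵀ + M2 * M1ᵀ = 0)
    (hc2 : M3 * M4ᵀ + M4 * M3ᵀ = 0)
    (hc3 : M1 * M4ᵀ + M2 * M3ᵀ = 1)
    (hinv : IsUnit M11) :
    (M31 * M11⁻¹ + (M42 + M31 * M11⁻¹ * M22) * (M32 + M31 * M11⁻¹ * M12)ᵀ).IsSymm := by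
  subst h1 h2 h3 h4
  have hA : M31 * M11⁻¹ * M11 = M31 :=
    nonsing_inv_mul_cancel_right _ _ ((isUnit_iff_isUnit_det M11).mp hinv)
  simp only [← sub_eq_add_of_charTwo] at hc1 hc2 hc3 ⊢
  exact isSymm_sub_mul_transpose_of_symplecticForm hc1 hc2 hc3 hA
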